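/- For complex numbers a, b, c and a nonnegative integer n (Saalschütz's theorem): the sum over k from 0 to n of ((a)_k (b)_k (-n)_k) / (k! (c)_k (1+a+b-c-n)_k) equals ((c-a)_n (c-b)_n) / ((c)_n (c-a-b)_n), provided no denominator factor vanishes. -/
import Mathlib

noncomputable def poch (x : ℂ) (k : ℕ) : ℂ := ∏ i ∈ Finset.range k, (x + i)

@[simp] lemma poch_zero (x : ℂ) : poch x 0 = 1 := by simp [poch]

lemma poch_succ (x : ℂ) (k : ℕ) : poch x (k + 1) = poch x k * (x + k) := by
  simp [poch, Finset.prod_range_succ]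

lemma poch_succ' (x : ℂ) (k : ℕ) : poch x (k + 1) = x * poch (x + 1) k := by
  rw [poch, Finset.prod_range_succ']
  have h : ∀ i ∈ Finset.range k, x + ((i + 1 : ℕ) : ℂ) = x + 1 + i := fun i _ => by
    push_cast; ring
  rw [Finset.prod_congr rfl h]
  rw [poch]
  push_cast
  ring_nf

lemma poch_neg_nat (n : ℕ) : ∀ k ≤ n, poch (-(n : ℂ)) k = (-1) ^ k * (n.descFactorial k : ℂ) := by
  intro k hk
  induction k with
  | zero => simp
  | succ k ih =>
    rw [poch_succ, ih (le_of_lt (Nat.lt_of_succ_le hk)), Nat.descFactorial_succ]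
    have h : ((n - k : ℕ) : ℂ) = (n : ℂ) - k := by
      have hkn : k ≤ n := le_of_lt (Nat.lt_of_succ_le hk)
      push_cast [hkn]; ring
    push_cast [h]
    ring

lemma poch_add (x : ℂ) (m p : ℕ) : poch x (m + p) = poch x m * poch (x + m) p := by
  simp only [poch, Finset.prod_range_add]
  congr 1
  exact Finset.prod_congr rfl fun i _ => by push_cast; ring

lemma poch_reflect (x : ℂ) (k : ℕ) : poch x k = (-1) ^ k * poch (-x - k + 1) k := by
  calc poch x k = ∏ i ∈ Finset.range k, (x + ((k - 1 - i : ℕ) : ℂ)) :=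
        (Finset.prod_range_reflect (fun i => x + (i : ℂ)) k).symm
    _ = ∏ i ∈ Finset.range k, (-1) * (-x - k + 1 + i) := by
        refine Finset.prod_congr rfl fun i hi => ?_
        rw [Finset.mem_range] at hi
        have h1 : ((k - 1 - i : ℕ) : ℂ) = (k : ℂ) - 1 - i := by
          rw [Nat.sub_sub]
          rw [Nat.cast_sub (by omega)]
          push_cast
          ring
        rw [h1]
        ring
    _ = (-1) ^ k * poch (-x - k + 1) k := by
        rw [Finset.prod_mul_distrib, Finset.prod_const, poch]
        simp

lemma poch_split (x : ℂ) (n k : ℕ) (hk : k ≤ n) :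
    poch x n = poch x k * poch (x + k) (n - k) := by
  conv_lhs => rw [show n = k + (n - k) by omega, poch_add]

lemma poch_split_cab (a b c : ℂ) (n k : ℕ) (hk : k ≤ n) :
    poch (c - a - b) n
      = poch (c - a - b) (n - k) * ((-1) ^ k * poch (1 + a + b - c - n) k) := by
  conv_lhs => rw [show n = (n - k) + k by omega, poch_add]
  congr 1
  rw [poch_reflect (c - a - b + ((n - k : ℕ) : ℂ)) k]
  have h : ((n - k : ℕ) : ℂ) = (n : ℂ) - k := by push_cast [hk]; ring
  congr 1
  rw [h]
  ring

lemma key (n : ℕ) (a b c : ℂ) :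
    ∑ k ∈ Finset.range (n + 1), ((n.choose k : ℕ) : ℂ) * poch a k * poch b k *
      poch (c - a - b) (n - k) * poch (c + k) (n - k)
      = poch (c - a) n * poch (c - b) n := by
  induction n with
  | zero => simp
  | succ n ih =>
    let H : ℕ → ℂ := fun j =>
      -(((n.choose j : ℕ) : ℂ) * poch a (j + 1) * poch b (j + 1) *
        poch (c - a - b) (n - j) * poch (c + j) (n - j))
    have hHdef : ∀ j, H j = -(((n.choose j : ℕ) : ℂ) * poch a (j + 1) * poch b (j + 1) *
        poch (c - a - b) (n - j) * poch (c + j) (n - j)) := fun j => rfl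
    have hdiff : ∑ k ∈ Finset.range (n + 1 + 1),
        ((((n + 1).choose k : ℕ) : ℂ) * poch a k * poch b k *
          poch (c - a - b) (n + 1 - k) * poch (c + k) (n + 1 - k)
         - ((c - a + n) * (c - b + n)) * (((n.choose k : ℕ) : ℂ) * poch a k * poch b k *
          poch (c - a - b) (n - k) * poch (c + k) (n - k))) = 0 := by
      rw [Finset.sum_range_succ']
      have h0 : ((((n + 1).choose 0 : ℕ) : ℂ) * poch a 0 * poch b 0 *
          poch (c - a - b) (n + 1 - 0) * poch (c + (0 : ℕ)) (n + 1 - 0)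
         - ((c - a + n) * (c - b + n)) * (((n.choose 0 : ℕ) : ℂ) * poch a 0 * poch b 0 *
          poch (c - a - b) (n - 0) * poch (c + (0 : ℕ)) (n - 0))) = H 0 := by
        rw [hHdef 0]
        simp only [Nat.choose_zero_right, poch_zero, Nat.sub_zero, Nat.cast_zero, Nat.cast_one,
          add_zero, one_mul, mul_one]
        rw [poch_succ (c - a - b) n, poch_succ c n, poch_succ' a 0, poch_succ' b 0]
        simp only [poch_zero, Nat.cast_zero, mul_one]
        ring
      have hstep : ∀ j ∈ Finset.range (n + 1),
          ((((n + 1).choose (j + 1) : ℕ) : ℂ) * poch a (j + 1) * poch b (j + 1) *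
            poch (c - a - b) (n + 1 - (j + 1)) * poch (c + ((j + 1 : ℕ) : ℂ)) (n + 1 - (j + 1))
           - ((c - a + n) * (c - b + n)) * (((n.choose (j + 1) : ℕ) : ℂ) * poch a (j + 1) *
            poch b (j + 1) * poch (c - a - b) (n - (j + 1)) *
            poch (c + ((j + 1 : ℕ) : ℂ)) (n - (j + 1)))) = H (j + 1) - H j := by
        intro j hj
        rw [Finset.mem_range] at hj
        have hj' : j ≤ n := Nat.lt_succ_iff.mp hj
        rw [hHdef (j + 1), hHdef j]
        rcases eq_or_lt_of_le hj' with rfl | hlt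
        · simp only [Nat.succ_sub_succ, Nat.sub_self, Nat.choose_succ_self, Nat.choose_self,
            Nat.cast_zero, Nat.cast_one, poch_zero, mul_one, one_mul, zero_mul, mul_zero,
            Nat.choose_succ_self_right]
          ring
        · obtain ⟨m, rfl⟩ := Nat.exists_eq_add_of_lt hlt
          have e1 : j + m + 1 - j = m + 1 := by omega
          have e2 : j + m + 1 - (j + 1) = m := by omega
          have e3 : j + m + 1 + 1 - (j + 1) = m + 1 := by omega
          rw [e1, e2, e3]
          have hP : (((j + m + 1 + 1).choose (j + 1) : ℕ) : ℂ)
              = (((j + m + 1).choose j : ℕ) : ℂ) + (((j + m + 1).choose (j + 1) : ℕ) : ℂ) := by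
            rw [Nat.choose_succ_succ (j + m + 1) j]
            push_cast
            ring
          have hY : (((j + m + 1).choose (j + 1) : ℕ) : ℂ) * ((j : ℂ) + 1)
              = (((j + m + 1).choose j : ℕ) : ℂ) * ((m : ℂ) + 1) := by
            have h := Nat.choose_succ_right_eq (j + m + 1) j
            rw [e1] at h
            exact_mod_cast h
          rw [hP]
          rw [poch_succ (c - a - b) m]
          rw [poch_succ (c + ((j + 1 : ℕ) : ℂ)) m]
          rw [poch_succ' (c + (j : ℕ)) m]
          rw [poch_succ a (j + 1), poch_succ b (j + 1)]
          have hc1 : c + ((j : ℕ) : ℂ) + 1 = c + (((j + 1 : ℕ) : ℕ) : ℂ) := by push_cast; ring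
          rw [hc1]
          push_cast
          linear_combination (-(c - a - b + (m : ℂ)) * poch a (j + 1) * poch b (j + 1) *
            poch (c - a - b) m * poch (c + ((j : ℂ) + 1)) m) * hY
      rw [Finset.sum_congr rfl hstep, Finset.sum_range_sub H, h0, hHdef (n + 1)]
      simp [Nat.choose_succ_self]
    have hsub : ∑ k ∈ Finset.range (n + 1 + 1),
        ((((n + 1).choose k : ℕ) : ℂ) * poch a k * poch b k *
          poch (c - a - b) (n + 1 - k) * poch (c + k) (n + 1 - k))
        = ((c - a + n) * (c - b + n)) * ∑ k ∈ Finset.range (n + 1 + 1),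
          (((n.choose k : ℕ) : ℂ) * poch a k * poch b k *
          poch (c - a - b) (n - k) * poch (c + k) (n - k)) := by
      rw [Finset.sum_sub_distrib, ← Finset.mul_sum] at hdiff
      exact sub_eq_zero.mp hdiff
    rw [hsub, Finset.sum_range_succ]
    rw [Nat.choose_succ_self]
    simp only [Nat.cast_zero, zero_mul, add_zero]
    rw [ih, poch_succ (c - a) n, poch_succ (c - b) n]
    ring

/-- Saalschütz's theorem. -/
theorem saalschutz (a b c : ℂ) (n : ℕ)
    (hden : ∀ k ≤ n, poch c k ≠ 0 ∧ poch (1 + a + b - c - n) k ≠ 0)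
    (hc : poch c n ≠ 0) (hcab : poch (c - a - b) n ≠ 0) :
    ∑ k ∈ Finset.range (n + 1),
      poch a k * poch b k * poch (-(n : ℂ)) k /
        ((k.factorial : ℂ) * poch c k * poch (1 + a + b - c - n) k)
      = poch (c - a) n * poch (c - b) n / (poch c n * poch (c - a - b) n) := by
  have hterm : ∀ k ∈ Finset.range (n + 1),
      poch a k * poch b k * poch (-(n : ℂ)) k /
        ((k.factorial : ℂ) * poch c k * poch (1 + a + b - c - n) k)
      = (((n.choose k : ℕ) : ℂ) * poch a k * poch b k * poch (c - a - b) (n - k) *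
          poch (c + k) (n - k)) / (poch c n * poch (c - a - b) n) := by
    intro k hk
    rw [Finset.mem_range, Nat.lt_succ_iff] at hk
    obtain ⟨h1, h2⟩ := hden k hk
    have hf : (k.factorial : ℂ) ≠ 0 := by exact_mod_cast k.factorial_ne_zero
    rw [div_eq_div_iff (mul_ne_zero (mul_ne_zero hf h1) h2) (mul_ne_zero hc hcab)]
    rw [poch_neg_nat n k hk, poch_split_cab a b c n k hk, poch_split c n k hk]
    have hsq : ((-1 : ℂ)) ^ k * (-1) ^ k = 1 := by
      rw [← mul_pow]; norm_num
    have hd : ((n.descFactorial k : ℕ) : ℂ) = (k.factorial : ℂ) * ((n.choose k : ℕ) : ℂ) := by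
      exact_mod_cast congrArg (Nat.cast : ℕ → ℂ) (Nat.descFactorial_eq_factorial_mul_choose n k)
    linear_combination (poch a k * poch b k * ((n.descFactorial k : ℕ) : ℂ) * poch c k *
        poch (c + k) (n - k) * poch (c - a - b) (n - k) * poch (1 + a + b - c - (n : ℂ)) k) * hsq
      + (poch a k * poch b k * poch c k * poch (c + k) (n - k) * poch (c - a - b) (n - k) *
        poch (1 + a + b - c - (n : ℂ)) k) * hd
  rw [Finset.sum_congr rfl hterm, ← Finset.sum_div, key n a b c]
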